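/- If (z_k)_{k≥1} is a sequence of integers with |z_k| < a_k for every k ≥ 1 and the (absolutely convergent) series ∑_{k=1}^∞ z_k ζ_k is an integer (i.e., ∑_{k=1}^∞ z_k ζ_k ≡ 0 (mod 1)), then z_k = 0 for every k, where ζ_j = |q_j α − p_j|. -/

import Mathlib

open scoped BigOperators

/-- The Gauss map `G(x) = 1/x - ⌊1/x⌋`. -/
noncomputable def gaussMap (x : ℝ) : ℝ := Int.fract (1 / x)

/-- The partial quotients of the continued fraction of `α`:
`a 0 = ⌊α⌋` and `a k = ⌊1 / G^[k-1] (fract α)⌋` for `k ≥ 1`. -/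
noncomputable def cfA (α : ℝ) : ℕ → ℤ
  | 0 => ⌊α⌋
  | k + 1 => ⌊1 / (gaussMap^[k] (Int.fract α))⌋

/-- Numerators of the convergents: `p 0 = 1`, `p 1 = a 0`,
`p k = a (k-1) * p (k-1) + p (k-2)`. -/
noncomputable def cfP (α : ℝ) : ℕ → ℤ
  | 0 => 1
  | 1 => cfA α 0
  | k + 2 => cfA α (k + 1) * cfP α (k + 1) + cfP α k

/-- Denominators of the convergents: `q 0 = 0`, `q 1 = 1`,
`q k = a (k-1) * q (k-1) + q (k-2)`. -/
noncomputable def cfQ (α : ℝ) : ℕ → ℤ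
  | 0 => 0
  | 1 => 1
  | k + 2 => cfA α (k + 1) * cfQ α (k + 1) + cfQ α k

/-- `ζ k = |q k * α - p k|`. -/
noncomputable def cfZeta (α : ℝ) (k : ℕ) : ℝ := |(cfQ α k : ℝ) * α - (cfP α k : ℝ)|

/-- `ε k = |α - p k / q k|`. -/
noncomputable def cfEps (α : ℝ) (k : ℕ) : ℝ := |α - (cfP α k : ℝ) / (cfQ α k : ℝ)|

/-!
Write `x_k = G^k(fract α)` for the orbit of `fract α` under the Gauss map. Then
`q_{k+1} α - p_{k+1} = -x_k (q_k α - p_k)`, so `ζ_{k+1} = x_k ζ_k > 0`, and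
`1 / x_k = a_{k+1} + x_{k+1}` turns this into `ζ_{k+2} = ζ_k - a_{k+1} ζ_{k+1}`.
Everything else uses only this recurrence. Telescoping it gives
`∑_{i > j} a_i ζ_i = ζ_j + ζ_{j+1}`, hence for `|z_i| ≤ a_i - 1` the tail satisfies
`|∑_{i > j} z_i ζ_i| ≤ ζ_j - ∑_{i > j+1} ζ_i < ζ_j`. With `j = 0` and `ζ_0 = 1` the integer
sum must be `0`; then `|z_1| ζ_1 = |∑_{i > 1} z_i ζ_i| < ζ_1` forces `z_1 = 0`, and we shift.
-/

structure IsContFracZeta (a : ℕ → ℤ) (ζ : ℕ → ℝ) : Prop where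
  pos : ∀ k, 0 < ζ k
  one_le : ∀ k, 1 ≤ a (k + 1)
  recurrence : ∀ k, ζ (k + 2) = ζ k - a (k + 1) * ζ (k + 1)

namespace IsContFracZeta

variable {a : ℕ → ℤ} {ζ : ℕ → ℝ}

theorem shift (h : IsContFracZeta a ζ) :
    IsContFracZeta (fun k => a (k + 1)) (fun k => ζ (k + 1)) :=
  ⟨fun k => h.pos (k + 1), fun k => h.one_le (k + 1), fun k => h.recurrence (k + 1)⟩

theorem le_mul (h : IsContFracZeta a ζ) (k : ℕ) : ζ (k + 1) ≤ a (k + 1) * ζ (k + 1) :=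
  le_mul_of_one_le_left (h.pos _).le (by exact_mod_cast h.one_le k)

theorem succ_lt (h : IsContFracZeta a ζ) (k : ℕ) : ζ (k + 1) < ζ k := by
  linarith [h.pos (k + 2), h.recurrence k, h.le_mul k]

theorem add_two_le_half (h : IsContFracZeta a ζ) (k : ℕ) : ζ (k + 2) ≤ ζ k / 2 := by
  linarith [h.recurrence k, h.le_mul k, h.succ_lt (k + 1)]

theorem two_mul_le (h : IsContFracZeta a ζ) (k : ℕ) : ζ (2 * k) ≤ ζ 0 * 2⁻¹ ^ k := by
  induction k with
  | zero => simp
  | succ k ih =>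
    calc ζ (2 * (k + 1)) ≤ ζ (2 * k) / 2 := h.add_two_le_half (2 * k)
      _ ≤ ζ 0 * 2⁻¹ ^ (k + 1) := by rw [pow_succ]; linarith

theorem summable (h : IsContFracZeta a ζ) : Summable ζ := by
  have hgeom : Summable fun k : ℕ => ζ 0 * 2⁻¹ ^ k :=
    (summable_geometric_of_lt_one (by norm_num) (by norm_num)).mul_left _
  refine .even_add_odd (hgeom.of_nonneg_of_le (fun k => (h.pos _).le) h.two_mul_le)
    (hgeom.of_nonneg_of_le (fun k => (h.pos _).le) fun k => ?_)
  exact (h.succ_lt _).le.trans (h.two_mul_le k)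

/-- Telescoping the recurrence: `a_{i+1} ζ_{i+1} = ζ_i - ζ_{i+2}`. -/
theorem hasSum_mul (h : IsContFracZeta a ζ) :
    HasSum (fun i => (a (i + 1) : ℝ) * ζ (i + 1)) (ζ 0 + ζ 1) := by
  have hζ := h.summable.hasSum
  have htel : HasSum (fun i => ζ i - ζ (i + 2)) (ζ 0 + ζ 1) := by
    simpa [Finset.sum_range_succ] using hζ.sub ((hasSum_nat_add_iff' 2).mpr hζ)
  exact htel.congr_fun fun i => by linarith [h.recurrence i]

theorem summable_mul_of_abs_lt (h : IsContFracZeta a ζ) {z : ℕ → ℤ}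
    (hz : ∀ k, |z (k + 1)| < a (k + 1)) : Summable fun i => (z (i + 1) : ℝ) * ζ (i + 1) := by
  refine h.hasSum_mul.summable.of_norm_bounded fun i => ?_
  rw [norm_mul, Real.norm_eq_abs, Real.norm_eq_abs, abs_of_pos (h.pos _), ← Int.cast_abs]
  exact mul_le_mul_of_nonneg_right (by exact_mod_cast (hz i).le) (h.pos _).le

theorem abs_tsum_mul_lt (h : IsContFracZeta a ζ) {z : ℕ → ℤ}
    (hz : ∀ k, |z (k + 1)| < a (k + 1)) : |∑' i, (z (i + 1) : ℝ) * ζ (i + 1)| < ζ 0 := by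
  have htail : Summable fun i => ζ (i + 1) := h.shift.summable
  have hbound : ∀ i, ‖(z (i + 1) : ℝ) * ζ (i + 1)‖ ≤ ((a (i + 1) : ℝ) - 1) * ζ (i + 1) := by
    intro i
    rw [norm_mul, Real.norm_eq_abs, Real.norm_eq_abs, abs_of_pos (h.pos _), ← Int.cast_abs]
    exact mul_le_mul_of_nonneg_right (by exact_mod_cast Int.le_sub_one_of_lt (hz i)) (h.pos _).le
  have hsum : HasSum (fun i => ((a (i + 1) : ℝ) - 1) * ζ (i + 1)) (ζ 0 + ζ 1 - ∑' i, ζ (i + 1)) :=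
    (h.hasSum_mul.sub htail.hasSum).congr_fun fun i => by ring
  have h12 : ζ 1 + ζ 2 ≤ ∑' i, ζ (i + 1) := by
    simpa [Finset.sum_range_succ] using htail.sum_le_tsum (Finset.range 2) fun i _ => (h.pos _).le
  calc |∑' i, (z (i + 1) : ℝ) * ζ (i + 1)| ≤ ζ 0 + ζ 1 - ∑' i, ζ (i + 1) :=
        tsum_of_norm_bounded hsum hbound
    _ < ζ 0 := by linarith [h.pos 2]

theorem eq_zero_and_tsum_eq_zero (h : IsContFracZeta a ζ) {z : ℕ → ℤ}
    (hz : ∀ k, |z (k + 1)| < a (k + 1)) (hsum : ∑' i, (z (i + 1) : ℝ) * ζ (i + 1) = 0) :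
    z 1 = 0 ∧ ∑' i, (z (i + 2) : ℝ) * ζ (i + 2) = 0 := by
  have hsplit : z 1 * ζ 1 + ∑' i, (z (i + 2) : ℝ) * ζ (i + 2) = 0 :=
    hsum ▸ ((h.summable_mul_of_abs_lt hz).tsum_eq_zero_add).symm
  have htail : |∑' i, (z (i + 2) : ℝ) * ζ (i + 2)| < ζ 1 :=
    h.shift.abs_tsum_mul_lt (z := fun k => z (k + 1)) fun k => hz (k + 1)
  have hz1 : z 1 = 0 := by
    by_contra hne
    have hone : (1 : ℝ) ≤ |(z 1 : ℝ)| := by exact_mod_cast Int.one_le_abs hne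
    have hlt : |(z 1 : ℝ) * ζ 1| < ζ 1 := by rwa [eq_neg_of_add_eq_zero_left hsplit, abs_neg]
    rw [abs_mul, abs_of_pos (h.pos 1)] at hlt
    nlinarith [h.pos 1]
  refine ⟨hz1, ?_⟩
  simpa [hz1] using hsplit

theorem eq_zero_of_tsum_eq_zero (h : IsContFracZeta a ζ) {z : ℕ → ℤ}
    (hz : ∀ k, |z (k + 1)| < a (k + 1)) (hsum : ∑' i, (z (i + 1) : ℝ) * ζ (i + 1) = 0)
    (n : ℕ) : z (n + 1) = 0 := by
  induction n generalizing a ζ z with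
  | zero => exact (h.eq_zero_and_tsum_eq_zero hz hsum).1
  | succ n ih =>
    exact ih h.shift (z := fun k => z (k + 1)) (fun k => hz (k + 1))
      (h.eq_zero_and_tsum_eq_zero hz hsum).2

theorem eq_zero_of_tsum_eq_intCast (h : IsContFracZeta a ζ) (h0 : ζ 0 ≤ 1) {z : ℕ → ℤ}
    (hz : ∀ k, |z (k + 1)| < a (k + 1)) {m : ℤ} (hsum : ∑' i, (z (i + 1) : ℝ) * ζ (i + 1) = m)
    (n : ℕ) : z (n + 1) = 0 := by
  have hm : |(m : ℝ)| < 1 := hsum ▸ (h.abs_tsum_mul_lt hz).trans_le h0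
  have hm0 : m = 0 := by
    rw [← Int.cast_abs] at hm
    exact Int.abs_lt_one_iff.mp (by exact_mod_cast hm)
  exact h.eq_zero_of_tsum_eq_zero hz (by rw [hsum, hm0, Int.cast_zero]) n

end IsContFracZeta

noncomputable def gaussOrbit (α : ℝ) (k : ℕ) : ℝ := gaussMap^[k] (Int.fract α)

section gaussOrbit

variable {α : ℝ}

theorem gaussOrbit_succ (α : ℝ) (k : ℕ) :
    gaussOrbit α (k + 1) = Int.fract (1 / gaussOrbit α k) :=
  Function.iterate_succ_apply' gaussMap k (Int.fract α)

theorem gaussOrbit_succ_eq_sub (α : ℝ) (k : ℕ) :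
    gaussOrbit α (k + 1) = 1 / gaussOrbit α k - cfA α (k + 1) :=
  gaussOrbit_succ α k

theorem gaussOrbit_lt_one (α : ℝ) (k : ℕ) : gaussOrbit α k < 1 := by
  cases k with
  | zero => exact Int.fract_lt_one α
  | succ k => exact gaussOrbit_succ α k ▸ Int.fract_lt_one _

theorem Irrational.gaussOrbit (hα : Irrational α) (k : ℕ) : Irrational (gaussOrbit α k) := by
  induction k with
  | zero => exact hα.sub_intCast _
  | succ k ih =>
    rw [gaussOrbit_succ_eq_sub, one_div]
    exact ih.inv.sub_intCast _

theorem gaussOrbit_pos (hα : Irrational α) (k : ℕ) : 0 < gaussOrbit α k := by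
  refine lt_of_le_of_ne ?_ (hα.gaussOrbit k).ne_zero.symm
  cases k with
  | zero => exact Int.fract_nonneg α
  | succ k => exact gaussOrbit_succ α k ▸ Int.fract_nonneg _

theorem one_le_cfA (hα : Irrational α) (k : ℕ) : 1 ≤ cfA α (k + 1) := by
  refine Int.le_floor.mpr (show ((1 : ℤ) : ℝ) ≤ 1 / gaussOrbit α k from ?_)
  rw [Int.cast_one, one_le_div (gaussOrbit_pos hα k)]
  exact (gaussOrbit_lt_one α k).le

end gaussOrbit

section cfZeta

variable {α : ℝ}

theorem cfZeta_zero (α : ℝ) : cfZeta α 0 = 1 := by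
  simp [cfZeta, cfQ, cfP]

theorem cfQ_mul_sub_cfP_succ (hα : Irrational α) (k : ℕ) :
    (cfQ α (k + 1) : ℝ) * α - cfP α (k + 1) =
      -(gaussOrbit α k * ((cfQ α k : ℝ) * α - cfP α k)) := by
  induction k with
  | zero =>
    simp only [cfQ, cfP, cfA, gaussOrbit, Function.iterate_zero_apply, Int.fract]
    push_cast
    ring
  | succ k ih =>
    have hx := (gaussOrbit_pos hα k).ne'
    have hrec : (cfQ α (k + 2) : ℝ) * α - cfP α (k + 2) =
        cfA α (k + 1) * ((cfQ α (k + 1) : ℝ) * α - cfP α (k + 1)) + ((cfQ α k : ℝ) * α - cfP α k) := by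
      simp only [cfQ, cfP, Int.cast_add, Int.cast_mul]
      ring
    rw [hrec, ih, gaussOrbit_succ_eq_sub]
    field_simp
    ring

theorem cfZeta_succ (hα : Irrational α) (k : ℕ) :
    cfZeta α (k + 1) = gaussOrbit α k * cfZeta α k := by
  rw [cfZeta, cfQ_mul_sub_cfP_succ hα, abs_neg, abs_mul, abs_of_pos (gaussOrbit_pos hα k),
    cfZeta]

theorem isContFracZeta_cfZeta (hα : Irrational α) : IsContFracZeta (cfA α) (cfZeta α) where
  pos k := by
    induction k with
    | zero => simp [cfZeta_zero]
    | succ k ih => exact cfZeta_succ hα k ▸ mul_pos (gaussOrbit_pos hα k) ih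
  one_le := one_le_cfA hα
  recurrence k := by
    have hx := (gaussOrbit_pos hα k).ne'
    rw [cfZeta_succ hα (k + 1), cfZeta_succ hα k, gaussOrbit_succ_eq_sub]
    field_simp

end cfZeta

/-- If the integers `z k` (for `k ≥ 1`) satisfy `|z k| < a k` and
`∑_{k=1}^∞ z k ζ k ≡ 0 (mod 1)`, then all `z k` vanish. -/
theorem all_zero (α : ℝ) (hα : Irrational α) (z : ℕ → ℤ)
    (hz : ∀ k, 1 ≤ k → |z k| < cfA α k)
    (hsum : ∃ m : ℤ, (∑' k : ℕ, (z (k + 1) : ℝ) * cfZeta α (k + 1)) = (m : ℝ)) :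
    ∀ k, 1 ≤ k → z k = 0 := by
  obtain ⟨m, hm⟩ := hsum
  intro k hk
  obtain ⟨n, rfl⟩ := Nat.exists_eq_add_of_le' hk
  exact (isContFracZeta_cfZeta hα).eq_zero_of_tsum_eq_intCast (cfZeta_zero α).le
    (fun k => hz (k + 1) k.succ_pos) hm n
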